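/- For every integer m ≥ 1 and every s ∈ [0,1], B_m(s) ≤ 3 + μ·√m. -/

import Mathlib

open Real MeasureTheory Finset

/-- Density of the standard normal distribution. -/
noncomputable def stdPdf (x : ℝ) : ℝ := Real.exp (-x ^ 2 / 2) / Real.sqrt (2 * Real.pi)

/-- Cumulative distribution function of the standard normal distribution. -/
noncomputable def stdCdf (x : ℝ) : ℝ := ∫ t in Set.Iic x, stdPdf t

/-- The Mills ratio. -/
noncomputable def mills (x : ℝ) : ℝ := (1 - stdCdf x) / stdPdf x

/-- The function `f(x) = x - x² M(x)`. -/
noncomputable def fMills (x : ℝ) : ℝ := x - x ^ 2 * mills x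

/-- `μ`, the supremum of `f` over `[0, ∞)`. -/
noncomputable def muMills : ℝ := sSup (fMills '' Set.Ici 0)

/-- The probability simplex. -/
def probSimplex (n : ℕ) : Set (Fin n → ℝ) :=
  {p | (∀ i, 0 ≤ p i) ∧ ∑ i, p i = 1}

/-- The positive probability simplex. -/
def probSimplexPos (n : ℕ) : Set (Fin n → ℝ) :=
  {p | (∀ i, 0 < p i) ∧ ∑ i, p i = 1}

/-- Expected number of connected components of Ross's random graph. -/
noncomputable def EC {n : ℕ} (p : Fin n → ℝ) : ℝ :=
  ∑ S ∈ (Finset.univ : Finset (Fin n)).powerset.filter (fun S => S.Nonempty),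
    (S.card - 1).factorial * ∏ j ∈ S, p j

/-- The total variation distance. -/
noncomputable def TV {n : ℕ} (p q : Fin n → ℝ) : ℝ := (∑ i, |p i - q i|) / 2

/-- The decreasing rearrangement of a vector. -/
noncomputable def decRearrange {n : ℕ} (x : Fin n → ℝ) : Fin n → ℝ :=
  fun j => x (Tuple.sort x j.rev)

/-- `Majorizes x y` means `x ≻ y`. -/
def Majorizes {n : ℕ} (x y : Fin n → ℝ) : Prop :=
  (∀ k : ℕ, ∑ j ∈ Finset.univ.filter (fun j : Fin n => (j : ℕ) < k), decRearrange y j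
      ≤ ∑ j ∈ Finset.univ.filter (fun j : Fin n => (j : ℕ) < k), decRearrange x j)
  ∧ ∑ j, x j = ∑ j, y j

/-- The coefficients `c_{k,m}`. -/
noncomputable def ckm (m k : ℕ) : ℝ := (m.choose k) * (k + 1).factorial / (m : ℝ) ^ k

/-- The sum `S_m(s)`. -/
noncomputable def Sm (m : ℕ) (s : ℝ) : ℝ := ∑ k ∈ Finset.Icc 1 m, ckm m k * (1 - s) ^ (k - 1)

/-- The quantity `B_m(s)`. -/
noncomputable def Bm (m : ℕ) (s : ℝ) : ℝ := s * ∑ k ∈ Finset.Icc 1 m, ckm m k * (1 - s) ^ k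

/-!
Write `c_{k,m} = (k + 1) q_k` with `q_k = m(m-1)⋯(m-k+1) / m^k ≤ exp(-k(k-1)/(2m))`, and
`(1 - s)^k ≤ exp(-s(k-1))`. Splitting `k + 1 = (k - 1) + 2`, the part with weight `2` is a
geometric sum, at most `2` after multiplying by `s`. The part with weight `j = k - 1` is a sum
`∑ j g(j)` with `g(x) = exp(-x²/(2m) - sx)` decreasing, hence at most `∫₀^∞ (x + 1) g(x) dx`.
Substituting `x = √m y` and completing the square (`exp(-y²/2 - ay) = φ(y + a)/φ(a)`) gives
`∫₀^∞ exp(-y²/2 - ay) dy = M(a)` and `∫₀^∞ y exp(-y²/2 - ay) dy = 1 - a M(a)`, so with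
`a = s√m` that part contributes `√m f(a) + a M(a) ≤ √m μ + 1`. The second identity also gives
`a M(a) ≤ 1`, and `f(a) = ∫₀^∞ a y exp(-y²/2 - ay) dy ≤ M(0)` because `ay ≤ exp(ay)`, so `μ` is
finite.
-/

open Filter Set ProbabilityTheory Topology

lemma stdPdf_eq_gaussianPDFReal : stdPdf = gaussianPDFReal 0 1 := by
  ext x
  simp [stdPdf, gaussianPDFReal, div_eq_inv_mul]

lemma stdPdf_pos (x : ℝ) : 0 < stdPdf x := by
  unfold stdPdf
  positivity

lemma integrable_stdPdf : Integrable stdPdf :=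
  stdPdf_eq_gaussianPDFReal ▸ integrable_gaussianPDFReal 0 1

lemma integrable_mul_stdPdf : Integrable fun x => x * stdPdf x := by
  refine ((integrable_mul_exp_neg_mul_sq (b := 1 / 2) (by norm_num)).div_const
    √(2 * π)).congr (ae_of_all _ fun x => ?_)
  simp only [stdPdf]
  ring_nf

lemma hasDerivAt_stdPdf (x : ℝ) : HasDerivAt stdPdf (-x * stdPdf x) x := by
  have h : HasDerivAt (fun t : ℝ => -t ^ 2 / 2) (-x) x :=
    ((hasDerivAt_pow 2 x).neg.div_const 2).congr_deriv (by ring)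
  exact (h.exp.div_const √(2 * π)).congr_deriv (by rw [stdPdf]; ring)

lemma tendsto_stdPdf_atTop : Tendsto stdPdf atTop (𝓝 0) := by
  have h : Tendsto (fun x : ℝ => -x ^ 2 / 2) atTop atBot :=
    (tendsto_neg_atTop_atBot.comp (tendsto_pow_atTop two_ne_zero)).atBot_div_const two_pos
  exact (zero_div (√(2 * π))) ▸ (tendsto_exp_atBot.comp h).div_const √(2 * π)

lemma integral_Ioi_stdPdf (a : ℝ) : ∫ t in Ioi a, stdPdf t = 1 - stdCdf a := by
  have h := intervalIntegral.integral_Iic_add_Ioi (b := a) integrable_stdPdf.integrableOn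
    integrable_stdPdf.integrableOn
  rw [stdPdf_eq_gaussianPDFReal, integral_gaussianPDFReal_eq_one 0 one_ne_zero,
    ← stdPdf_eq_gaussianPDFReal] at h
  rw [stdCdf]
  linarith

lemma integral_Ioi_mul_stdPdf (a : ℝ) : ∫ t in Ioi a, t * stdPdf t = stdPdf a := by
  have h := integral_Ioi_of_hasDerivAt_of_tendsto' (a := a) (f := fun t => -stdPdf t)
    (fun t _ => (hasDerivAt_stdPdf t).neg) (by simpa using integrable_mul_stdPdf.integrableOn)
    (by simpa using tendsto_stdPdf_atTop.neg)
  simpa using h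

lemma integral_Ioi_zero_comp_add_right {E : Type*} [NormedAddCommGroup E] [NormedSpace ℝ E]
    (g : ℝ → E) (a : ℝ) : ∫ y in Ioi 0, g (y + a) = ∫ t in Ioi a, g t := by
  simpa using (measurePreserving_add_right volume a).setIntegral_preimage_emb
    (measurableEmbedding_addRight a) g (Ioi a)

lemma integral_Ioi_zero_comp_div {E : Type*} [NormedAddCommGroup E] [NormedSpace ℝ E]
    (g : ℝ → E) {σ : ℝ} (hσ : 0 < σ) : ∫ x in Ioi 0, g (x / σ) = σ • ∫ y in Ioi 0, g y := by
  simpa [div_eq_inv_mul] using integral_comp_mul_left_Ioi g 0 (inv_pos.2 hσ)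

lemma exp_neg_sq_div_two_sub_mul (a y : ℝ) :
    exp (-y ^ 2 / 2 - a * y) = stdPdf (y + a) / stdPdf a := by
  rw [eq_div_iff (stdPdf_pos a).ne', stdPdf, stdPdf, mul_div_assoc', ← exp_add]
  ring_nf

lemma integrable_exp_neg_sq_div_two_sub_mul (a : ℝ) :
    Integrable fun y => exp (-y ^ 2 / 2 - a * y) := by
  simpa only [exp_neg_sq_div_two_sub_mul] using
    (integrable_stdPdf.comp_add_right a).div_const (stdPdf a)

lemma mul_exp_neg_sq_div_two_sub_mul (a y : ℝ) : y * exp (-y ^ 2 / 2 - a * y) =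
    ((y + a) * stdPdf (y + a) - a * stdPdf (y + a)) / stdPdf a := by
  rw [exp_neg_sq_div_two_sub_mul]
  ring

lemma integrable_mul_exp_neg_sq_div_two_sub_mul (a : ℝ) :
    Integrable fun y => y * exp (-y ^ 2 / 2 - a * y) := by
  simpa only [mul_exp_neg_sq_div_two_sub_mul, Pi.sub_apply] using
    ((integrable_mul_stdPdf.comp_add_right a).sub
      ((integrable_stdPdf.comp_add_right a).const_mul a)).div_const (stdPdf a)

lemma integral_Ioi_exp_neg_sq_div_two_sub_mul (a : ℝ) :
    ∫ y in Ioi 0, exp (-y ^ 2 / 2 - a * y) = mills a := by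
  simp_rw [exp_neg_sq_div_two_sub_mul]
  rw [integral_div, integral_Ioi_zero_comp_add_right stdPdf, integral_Ioi_stdPdf, mills]

lemma integral_Ioi_mul_exp_neg_sq_div_two_sub_mul (a : ℝ) :
    ∫ y in Ioi 0, y * exp (-y ^ 2 / 2 - a * y) = 1 - a * mills a := by
  simp_rw [mul_exp_neg_sq_div_two_sub_mul]
  rw [integral_div, integral_sub (integrable_mul_stdPdf.comp_add_right a).integrableOn
      ((integrable_stdPdf.comp_add_right a).const_mul a).integrableOn, integral_const_mul,
    integral_Ioi_zero_comp_add_right (fun t => t * stdPdf t),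
    integral_Ioi_zero_comp_add_right stdPdf, integral_Ioi_mul_stdPdf, integral_Ioi_stdPdf, mills]
  field_simp [(stdPdf_pos a).ne']

lemma mul_mills_le_one (a : ℝ) : a * mills a ≤ 1 := by
  have h : 0 ≤ ∫ y in Ioi 0, y * exp (-y ^ 2 / 2 - a * y) :=
    setIntegral_nonneg measurableSet_Ioi fun y hy => mul_nonneg (le_of_lt hy) (exp_pos _).le
  rw [integral_Ioi_mul_exp_neg_sq_div_two_sub_mul] at h
  linarith

lemma fMills_le_mills_zero (a : ℝ) : fMills a ≤ mills 0 := by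
  have h : fMills a = ∫ y in Ioi 0, a * (y * exp (-y ^ 2 / 2 - a * y)) := by
    rw [integral_const_mul, integral_Ioi_mul_exp_neg_sq_div_two_sub_mul, fMills]
    ring
  rw [h, ← integral_Ioi_exp_neg_sq_div_two_sub_mul 0]
  refine setIntegral_mono_on
    ((integrable_mul_exp_neg_sq_div_two_sub_mul a).const_mul a).integrableOn
    (integrable_exp_neg_sq_div_two_sub_mul 0).integrableOn measurableSet_Ioi fun y _ => ?_
  calc a * (y * exp (-y ^ 2 / 2 - a * y)) ≤ exp (a * y) * exp (-y ^ 2 / 2 - a * y) := by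
        rw [← mul_assoc]
        gcongr
        linarith [add_one_le_exp (a * y)]
    _ = exp (-y ^ 2 / 2 - 0 * y) := by
        rw [← exp_add]
        ring_nf

lemma fMills_le_muMills {a : ℝ} (ha : 0 ≤ a) : fMills a ≤ muMills :=
  le_csSup ⟨mills 0, forall_mem_image.2 fun x _ => fMills_le_mills_zero x⟩ ⟨a, ha, rfl⟩

lemma muMills_nonneg : 0 ≤ muMills := by
  simpa [fMills] using fMills_le_muMills le_rfl

lemma add_one_mul_exp_eq_comp_div_sqrt {m : ℝ} (hm : 0 < m) (s x : ℝ) :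
    (x + 1) * exp (-x ^ 2 / (2 * m) - s * x) =
      √m * ((x / √m) * exp (-(x / √m) ^ 2 / 2 - s * √m * (x / √m))) +
        exp (-(x / √m) ^ 2 / 2 - s * √m * (x / √m)) := by
  have hsqrt : √m ≠ 0 := (Real.sqrt_pos.2 hm).ne'
  have hexp : -(x / √m) ^ 2 / 2 - s * √m * (x / √m) = -x ^ 2 / (2 * m) - s * x := by
    field_simp
    rw [Real.sq_sqrt hm.le]
    ring
  rw [hexp]
  field_simp

lemma integrable_add_one_mul_exp {m : ℝ} (hm : 0 < m) (s : ℝ) :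
    Integrable fun x => (x + 1) * exp (-x ^ 2 / (2 * m) - s * x) := by
  have hsqrt : √m ≠ 0 := (Real.sqrt_pos.2 hm).ne'
  simpa only [add_one_mul_exp_eq_comp_div_sqrt hm s, Pi.add_def] using
    (((integrable_mul_exp_neg_sq_div_two_sub_mul (s * √m)).comp_div hsqrt).const_mul √m).add
      ((integrable_exp_neg_sq_div_two_sub_mul (s * √m)).comp_div hsqrt)

lemma mul_integral_Ioi_add_one_mul_exp {m : ℝ} (hm : 0 < m) (s : ℝ) :
    s * ∫ x in Ioi 0, (x + 1) * exp (-x ^ 2 / (2 * m) - s * x) =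
      √m * fMills (s * √m) + s * √m * mills (s * √m) := by
  have hsqrt : 0 < √m := Real.sqrt_pos.2 hm
  simp_rw [add_one_mul_exp_eq_comp_div_sqrt hm s]
  rw [integral_add (((integrable_mul_exp_neg_sq_div_two_sub_mul (s * √m)).comp_div
      hsqrt.ne').const_mul √m).integrableOn
      ((integrable_exp_neg_sq_div_two_sub_mul (s * √m)).comp_div hsqrt.ne').integrableOn,
    integral_const_mul,
    integral_Ioi_zero_comp_div (fun y => y * exp (-y ^ 2 / 2 - s * √m * y)) hsqrt,
    integral_Ioi_zero_comp_div (fun y => exp (-y ^ 2 / 2 - s * √m * y)) hsqrt,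
    integral_Ioi_mul_exp_neg_sq_div_two_sub_mul, integral_Ioi_exp_neg_sq_div_two_sub_mul, fMills,
    smul_eq_mul, smul_eq_mul]
  ring

lemma antitoneOn_exp_neg_sq_div_sub_mul {m : ℝ} (hm : 0 < m) {s : ℝ} (hs : 0 ≤ s) :
    AntitoneOn (fun x => exp (-x ^ 2 / (2 * m) - s * x)) (Ici 0) := by
  intro x hx y _ hxy
  simp only [neg_div]
  gcongr

lemma sum_range_mul_le_integral_Ioi {g : ℝ → ℝ} (hg : AntitoneOn g (Ici 0))
    (hg0 : ∀ x, 0 ≤ x → 0 ≤ g x) (hint : IntegrableOn (fun x => (x + 1) * g x) (Ioi 0)) (n : ℕ) :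
    ∑ j ∈ range n, j * g j ≤ ∫ x in Ioi 0, (x + 1) * g x := by
  have hii : ∀ a b : ℝ, 0 ≤ a → a ≤ b → IntervalIntegrable (fun x => (x + 1) * g x) volume a b :=
    fun a b ha hab => (intervalIntegrable_iff_integrableOn_Ioc_of_le hab).2
      (hint.mono_set fun x hx => ha.trans_lt hx.1)
  have hstep : ∀ j : ℕ,
      ((j + 1 : ℕ) : ℝ) * g (j + 1 : ℕ) ≤ ∫ x in (j : ℝ)..(j + 1 : ℕ), (x + 1) * g x := by
    intro j
    have hj : (0 : ℝ) ≤ j := j.cast_nonneg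
    push_cast
    calc ((j : ℝ) + 1) * g (j + 1) = ∫ _ in (j : ℝ)..(j + 1), ((j : ℝ) + 1) * g (j + 1) := by simp
      _ ≤ ∫ x in (j : ℝ)..(j + 1), (x + 1) * g x := by
        refine intervalIntegral.integral_mono_on (by linarith) intervalIntegrable_const
          (hii _ _ hj (by linarith)) fun x hx => ?_
        have hx0 : 0 ≤ x := hj.trans hx.1
        exact mul_le_mul (by linarith [hx.1]) (hg hx0 (by simp; linarith) hx.2)
          (hg0 _ (by linarith)) (by linarith)
  have hsum : ∀ n : ℕ, ∑ j ∈ range (n + 1), j * g j ≤ ∫ x in (0 : ℝ)..n, (x + 1) * g x := by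
    intro n
    induction n with
    | zero => simp
    | succ n ih =>
      rw [sum_range_succ, ← intervalIntegral.integral_add_adjacent_intervals
        (hii 0 n le_rfl n.cast_nonneg) (hii n _ n.cast_nonneg (by simp))]
      exact add_le_add ih (hstep n)
  calc ∑ j ∈ range n, j * g j ≤ ∑ j ∈ range (n + 1), j * g j := by
        rw [sum_range_succ]
        exact le_add_of_nonneg_right (mul_nonneg n.cast_nonneg (hg0 _ n.cast_nonneg))
    _ ≤ ∫ x in (0 : ℝ)..n, (x + 1) * g x := hsum n
    _ ≤ ∫ x in Ioi 0, (x + 1) * g x := by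
        rw [intervalIntegral.integral_of_le n.cast_nonneg]
        exact setIntegral_mono_set hint
          ((ae_restrict_mem measurableSet_Ioi).mono fun x hx =>
            mul_nonneg (by linarith [mem_Ioi.1 hx]) (hg0 x (le_of_lt hx)))
          Ioc_subset_Ioi_self.eventuallyLE

lemma descFactorial_div_pow_le_exp {m : ℕ} (hm : 0 < m) (k : ℕ) :
    (m.descFactorial k : ℝ) / m ^ k ≤ exp (-(k * (k - 1) / (2 * m))) := by
  have hm' : (0 : ℝ) < m := by exact_mod_cast hm
  have hgauss : ∑ i ∈ range k, (i : ℝ) = k * (k - 1) / 2 := by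
    induction k with
    | zero => simp
    | succ n ih =>
      rw [sum_range_succ, ih]
      push_cast
      ring
  have hfactor : ∀ i ∈ range k, ((m - i : ℕ) : ℝ) / m ≤ exp (-(i / m)) := by
    intro i _
    rcases le_or_gt i m with hi | hi
    · rw [Nat.cast_sub hi, sub_div, div_self hm'.ne']
      exact one_sub_le_exp_neg _
    · rw [Nat.sub_eq_zero_of_le hi.le]
      simp only [Nat.cast_zero, zero_div]
      positivity
  calc (m.descFactorial k : ℝ) / m ^ k = ∏ i ∈ range k, ((m - i : ℕ) : ℝ) / m := by
        rw [Nat.descFactorial_eq_prod_range, prod_div_distrib, prod_const, card_range]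
        push_cast
        rfl
    _ ≤ ∏ i ∈ range k, exp (-(i / m)) := prod_le_prod (fun _ _ => by positivity) hfactor
    _ = exp (-(k * (k - 1) / (2 * m))) := by
        rw [← exp_sum, sum_neg_distrib, ← sum_div, hgauss]
        ring_nf

lemma ckm_eq (m k : ℕ) : ckm m k = (k + 1) * ((m.descFactorial k : ℝ) / m ^ k) := by
  rw [ckm, Nat.descFactorial_eq_factorial_mul_choose, Nat.factorial_succ]
  push_cast
  ring

lemma ckm_succ_mul_pow_le {m : ℕ} (hm : 0 < m) {s : ℝ} (hs0 : 0 ≤ s) (hs1 : s ≤ 1) (j : ℕ) :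
    ckm m (j + 1) * (1 - s) ^ (j + 1) ≤
      j * exp (-j ^ 2 / (2 * m) - s * j) + 2 * (1 - s) ^ (j + 1) := by
  set q : ℝ := (m.descFactorial (j + 1) : ℝ) / m ^ (j + 1)
  set t : ℝ := (1 - s) ^ (j + 1)
  have hq1 : q ≤ 1 := by
    rw [div_le_one (by positivity)]
    exact_mod_cast Nat.descFactorial_le_pow m (j + 1)
  have hqexp : q ≤ exp (-j ^ 2 / (2 * m)) := by
    refine (descFactorial_div_pow_le_exp hm (j + 1)).trans (exp_le_exp.2 ?_)
    push_cast
    rw [neg_div, neg_le_neg_iff]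
    gcongr
    nlinarith
  have ht0 : 0 ≤ t := pow_nonneg (by linarith) _
  have htexp : t ≤ exp (-(s * j)) := calc
    t ≤ (1 - s) ^ j := pow_le_pow_of_le_one (by linarith) (by linarith) j.le_succ
    _ ≤ exp (-s) ^ j := pow_le_pow_left₀ (by linarith) (one_sub_le_exp_neg s) j
    _ = exp (-(s * j)) := by rw [← exp_nat_mul]; ring_nf
  have hqt : q * t ≤ exp (-j ^ 2 / (2 * m) - s * j) := by
    rw [sub_eq_add_neg, exp_add]
    exact mul_le_mul hqexp htexp ht0 (exp_pos _).le
  rw [ckm_eq]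
  push_cast
  calc ((j : ℝ) + 1 + 1) * q * t = j * (q * t) + 2 * (q * t) := by ring
    _ ≤ j * exp (-j ^ 2 / (2 * m) - s * j) + 2 * t := by
        gcongr
        exact mul_le_of_le_one_left ht0 hq1

lemma mul_sum_range_one_sub_pow_succ_le_one {s : ℝ} (hs0 : 0 ≤ s) (hs1 : s ≤ 1) (n : ℕ) :
    s * ∑ j ∈ range n, (1 - s) ^ (j + 1) ≤ 1 := by
  have hgeom : s * ∑ j ∈ range n, (1 - s) ^ (j + 1) = (1 - s) * (1 - (1 - s) ^ n) := by
    rw [← geom_sum_mul_neg, sub_sub_cancel]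
    simp_rw [pow_succ, ← sum_mul]
    ring
  rw [hgeom]
  have : 0 ≤ (1 - s) ^ n := pow_nonneg (by linarith) n
  nlinarith

/-- Upper bound on `B_m(s)`. -/
theorem Bm_upper_bound (m : ℕ) (hm : 1 ≤ m) (s : ℝ) (hs : s ∈ Set.Icc (0:ℝ) 1) :
    Bm m s ≤ 3 + muMills * Real.sqrt (m : ℝ) := by
  obtain ⟨hs0, hs1⟩ := hs
  have hm' : (0 : ℝ) < m := by exact_mod_cast hm
  set g : ℝ → ℝ := fun x => exp (-x ^ 2 / (2 * m) - s * x)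
  calc Bm m s = s * ∑ j ∈ range m, ckm m (j + 1) * (1 - s) ^ (j + 1) := by
        rw [Bm, Finset.range_eq_Ico, Finset.sum_Ico_add' (fun k => ckm m k * (1 - s) ^ k) 0 m 1]
        rfl
    _ ≤ s * ∑ j ∈ range m, (j * g j + 2 * (1 - s) ^ (j + 1)) := by
        gcongr with j
        exact ckm_succ_mul_pow_le hm hs0 hs1 j
    _ = s * ∑ j ∈ range m, j * g j + 2 * (s * ∑ j ∈ range m, (1 - s) ^ (j + 1)) := by
        rw [sum_add_distrib, ← mul_sum]
        ring
    _ ≤ s * (∫ x in Ioi 0, (x + 1) * g x) + 2 * 1 := by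
        refine add_le_add (mul_le_mul_of_nonneg_left ?_ hs0) (mul_le_mul_of_nonneg_left
          (mul_sum_range_one_sub_pow_succ_le_one hs0 hs1 m) zero_le_two)
        exact sum_range_mul_le_integral_Ioi (antitoneOn_exp_neg_sq_div_sub_mul hm' hs0)
          (fun x _ => (exp_pos _).le) (integrable_add_one_mul_exp hm' s).integrableOn m
    _ = √m * fMills (s * √m) + s * √m * mills (s * √m) + 2 := by
        simp only [g]
        rw [mul_integral_Ioi_add_one_mul_exp hm' s]
        ring
    _ ≤ √m * muMills + 1 + 2 := by
        gcongr
        · exact fMills_le_muMills (by positivity)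
        · exact mul_mills_le_one _
    _ = 3 + muMills * √m := by ring
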